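/- Let M ∈ ℝ^{n×n} with rank(M) ≤ r. Then there exist B, C ∈ ℝ^{n×r} with B Cᵀ = M and (1/2)(‖B‖_F² + ‖C‖_F²) = Σ_{i=1}^{n} √(μ_i), where μ₁,…,μₙ are the eigenvalues of the real symmetric positive semidefinite matrix Mᵀ M. -/

import Mathlib

/-!
Let `v_j` be an orthonormal eigenbasis of `Mᵀ M` with eigenvalues `μ_j`. Then `‖M v_j‖² = μ_j`
and `M = ∑_j (M v_j) v_jᵀ`. Splitting each rank-one term as `(μ_j^{-1/4} M v_j)(μ_j^{1/4} v_j)ᵀ`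
gives two factors whose squared Frobenius norms both equal `∑_j √μ_j`. The columns with
`μ_j = 0` vanish, and the remaining `rank (Mᵀ M) = rank M ≤ r` columns fit into `r` slots.
-/

open Matrix

open Finset in
theorem Finset.exists_sum_comp_eq_of_card_le {ι κ α β : Type*} [Fintype ι] [Fintype κ] [Zero α]
    [AddCommMonoid β] (x : ι → α) (s : Finset ι) (hx : ∀ j ∉ s, x j = 0)
    (hs : #s ≤ Fintype.card κ) :
    ∃ y : κ → α, ∀ g : α → β, g 0 = 0 → ∑ k, g (y k) = ∑ j, g (x j) := by
  obtain ⟨e⟩ := Function.Embedding.nonempty_of_card_le (α := s) (β := κ) (by simpa using hs)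
  refine ⟨Function.extend e (fun j => x j) 0, fun g hg => ?_⟩
  calc ∑ k, g (Function.extend e (fun j => x j) 0 k)
      = ∑ k ∈ univ.map e, g (Function.extend e (fun j => x j) 0 k) := by
        refine (sum_subset (subset_univ _) fun k _ hk => ?_).symm
        rw [Function.extend_apply' _ _ _ fun ⟨j, hj⟩ => hk (by simp [← hj]), Pi.zero_apply, hg]
    _ = ∑ j ∈ s, g (x j) := by
        rw [sum_map, ← sum_coe_sort s]
        simp only [e.injective.extend_apply]
    _ = ∑ j, g (x j) :=
        sum_subset (subset_univ _) fun j _ hj => by rw [hx j hj, hg]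

namespace Matrix

open Finset in
theorem exists_mul_transpose_eq_of_card_le {l m ι κ R : Type*} [Fintype l] [Fintype m]
    [Fintype ι] [Fintype κ] [Semiring R] (B' : Matrix l ι R) (C' : Matrix m ι R)
    (s : Finset ι) (hB' : ∀ j ∉ s, ∀ i, B' i j = 0) (hC' : ∀ j ∉ s, ∀ i, C' i j = 0)
    (hs : #s ≤ Fintype.card κ) :
    ∃ (B : Matrix l κ R) (C : Matrix m κ R), B * Cᵀ = B' * C'ᵀ ∧
      ∑ i, ∑ k, B i k ^ 2 = ∑ i, ∑ j, B' i j ^ 2 ∧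
      ∑ i, ∑ k, C i k ^ 2 = ∑ i, ∑ j, C' i j ^ 2 := by
  obtain ⟨y, hy⟩ := exists_sum_comp_eq_of_card_le (β := R) (fun j => (B'ᵀ j, C'ᵀ j)) s
    (fun j hj => Prod.ext (funext (hB' j hj)) (funext (hC' j hj))) hs
  refine ⟨of fun i k => (y k).1 i, of fun i k => (y k).2 i, ?_, ?_, ?_⟩
  · ext i i'
    simpa [mul_apply] using hy (fun p => p.1 i * p.2 i') (by simp)
  · rw [sum_comm, sum_comm (f := fun i j => B' i j ^ 2)]
    simpa using hy (fun p => ∑ i, p.1 i ^ 2) (by simp)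
  · rw [sum_comm, sum_comm (f := fun i j => C' i j ^ 2)]
    simpa using hy (fun p => ∑ i, p.2 i ^ 2) (by simp)

end Matrix

namespace Matrix.IsHermitian

variable {n : Type*} [Fintype n] [DecidableEq n]

theorem eigenvectorBasis_dotProduct_self {A : Matrix n n ℝ} (hA : A.IsHermitian) (j : n) :
    ⇑(hA.eigenvectorBasis j) ⬝ᵥ ⇑(hA.eigenvectorBasis j) = 1 := by
  have := orthonormal_iff_ite.mp hA.eigenvectorBasis.orthonormal j j
  rw [if_pos rfl, EuclideanSpace.inner_eq_star_dotProduct] at this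
  simpa using this

variable {m : Type*} [Fintype m] {M : Matrix m n ℝ} (hH : (Mᵀ * M).IsHermitian)

theorem mulVec_eigenvectorBasis_dotProduct_self (j : n) :
    (M *ᵥ ⇑(hH.eigenvectorBasis j)) ⬝ᵥ (M *ᵥ ⇑(hH.eigenvectorBasis j)) = hH.eigenvalues j := by
  rw [dotProduct_mulVec, ← mulVec_transpose, mulVec_mulVec, hH.mulVec_eigenvectorBasis,
    smul_dotProduct, eigenvectorBasis_dotProduct_self, smul_eq_mul, mul_one]

theorem mulVec_eigenvectorBasis_eq_zero {j : n} (hj : hH.eigenvalues j = 0) :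
    M *ᵥ ⇑(hH.eigenvectorBasis j) = 0 := by
  rw [← dotProduct_self_eq_zero, mulVec_eigenvectorBasis_dotProduct_self, hj]

theorem sum_mulVec_eigenvectorBasis_mul (i : m) (i' : n) :
    ∑ j, (M *ᵥ ⇑(hH.eigenvectorBasis j)) i * hH.eigenvectorBasis j i' = M i i' := by
  let U : Matrix n n ℝ := hH.eigenvectorUnitary
  have hU : U * Uᵀ = 1 := Unitary.mul_star_self_of_mem hH.eigenvectorUnitary.2
  calc ∑ j, (M *ᵥ ⇑(hH.eigenvectorBasis j)) i * hH.eigenvectorBasis j i'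
      = (M * U * Uᵀ) i i' := rfl
    _ = M i i' := by rw [Matrix.mul_assoc, hU, Matrix.mul_one]

theorem eigenvalues_nonneg_of_transpose_mul_self (j : n) : 0 ≤ hH.eigenvalues j := by
  rw [← mulVec_eigenvectorBasis_dotProduct_self]
  exact Finset.sum_nonneg fun i _ => mul_self_nonneg _

end Matrix.IsHermitian

namespace Matrix

variable {m n : Type*} [Fintype m] [Fintype n] [DecidableEq n] {M : Matrix m n ℝ}
  (hH : (Mᵀ * M).IsHermitian)

-- Division by `0` makes the columns with `μ_j = 0` vanish, as they should.
noncomputable def balancedLeftFactor : Matrix m n ℝ :=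
  of fun i j => (M *ᵥ ⇑(hH.eigenvectorBasis j)) i / √√(hH.eigenvalues j)

noncomputable def balancedRightFactor : Matrix n n ℝ :=
  of fun i j => √√(hH.eigenvalues j) * hH.eigenvectorBasis j i

theorem balancedLeftFactor_mul_transpose_balancedRightFactor :
    balancedLeftFactor hH * (balancedRightFactor hH)ᵀ = M := by
  ext i i'
  rw [← hH.sum_mulVec_eigenvectorBasis_mul i i', mul_apply]
  refine Finset.sum_congr rfl fun j _ => ?_
  simp only [balancedLeftFactor, balancedRightFactor, transpose_apply, of_apply]
  rcases eq_or_ne (√√(hH.eigenvalues j)) 0 with hs | hs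
  · rw [Real.sqrt_eq_zero (Real.sqrt_nonneg _),
      Real.sqrt_eq_zero (hH.eigenvalues_nonneg_of_transpose_mul_self j)] at hs
    simp [hs, hH.mulVec_eigenvectorBasis_eq_zero hs]
  · field_simp

theorem sum_sq_balancedLeftFactor :
    ∑ i, ∑ j, balancedLeftFactor hH i j ^ 2 = ∑ j, √(hH.eigenvalues j) := by
  rw [Finset.sum_comm]
  refine Finset.sum_congr rfl fun j _ => ?_
  have h := hH.mulVec_eigenvectorBasis_dotProduct_self j
  simp only [dotProduct, ← sq] at h
  simp only [balancedLeftFactor, of_apply, div_pow, ← Finset.sum_div,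
    Real.sq_sqrt (Real.sqrt_nonneg _), h, Real.div_sqrt]

theorem sum_sq_balancedRightFactor :
    ∑ i, ∑ j, balancedRightFactor hH i j ^ 2 = ∑ j, √(hH.eigenvalues j) := by
  rw [Finset.sum_comm]
  refine Finset.sum_congr rfl fun j _ => ?_
  have h := hH.eigenvectorBasis_dotProduct_self j
  simp only [dotProduct, ← sq] at h
  simp only [balancedRightFactor, of_apply, mul_pow, ← Finset.mul_sum,
    Real.sq_sqrt (Real.sqrt_nonneg _), h, mul_one]

end Matrix

open Finset in
theorem exists_factorization_frobenius_eq_nuclearNorm_general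
    (n r : ℕ)
    (M : Matrix (Fin n) (Fin n) ℝ) (hrank : M.rank ≤ r)
    (hH : (Mᵀ * M).IsHermitian) :
    ∃ B C : Matrix (Fin n) (Fin r) ℝ,
      B * Cᵀ = M ∧
      (1 / 2) * ((∑ i : Fin n, ∑ k : Fin r, (B i k) ^ 2) +
                 (∑ i : Fin n, ∑ k : Fin r, (C i k) ^ 2)) =
        ∑ i : Fin n, Real.sqrt (hH.eigenvalues i) := by
  have hcard : #{j | hH.eigenvalues j ≠ 0} ≤ Fintype.card (Fin r) := by
    rw [← Fintype.card_subtype, ← hH.rank_eq_card_non_zero_eigs, rank_transpose_mul_self,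
      Fintype.card_fin]
    exact hrank
  obtain ⟨B, C, hBC, hB, hC⟩ := exists_mul_transpose_eq_of_card_le
    (balancedLeftFactor hH) (balancedRightFactor hH) _
    (fun j hj i => by simp_all [balancedLeftFactor])
    (fun j hj i => by simp_all [balancedRightFactor]) hcard
  refine ⟨B, C, hBC.trans (balancedLeftFactor_mul_transpose_balancedRightFactor hH), ?_⟩
  rw [hB, hC, sum_sq_balancedLeftFactor, sum_sq_balancedRightFactor]
  ring

/-- Every `M ∈ ℝ^{n×n}` with `rank(M) ≤ r` admits a factorization `M = B Cᵀ` with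
`B, C ∈ ℝ^{n×r}` such that `(1/2)(‖B‖_F² + ‖C‖_F²)` equals the nuclear norm of `M`
(the sum of the square roots of the eigenvalues of `Mᵀ M`). -/
theorem exists_factorization_frobenius_eq_nuclearNorm
    (n r : ℕ) (hn : 0 < n) (hr : 0 < r)
    (M : Matrix (Fin n) (Fin n) ℝ) (hrank : M.rank ≤ r)
    (hH : (Mᵀ * M).IsHermitian) :
    ∃ B C : Matrix (Fin n) (Fin r) ℝ,
      B * Cᵀ = M ∧
      (1 / 2) * ((∑ i : Fin n, ∑ k : Fin r, (B i k) ^ 2) +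
                 (∑ i : Fin n, ∑ k : Fin r, (C i k) ^ 2)) =
        ∑ i : Fin n, Real.sqrt (hH.eigenvalues i) :=
  exists_factorization_frobenius_eq_nuclearNorm_general n r M hrank hH
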